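/- Let C be a hereditary class of graphs that contains all complete graphs. Let G be a graph with a clique-cutset K and an associated cut-partition (A,B,K) of G. If both induced subgraphs G[A ∪ K] and G[B ∪ K] belong to G_C, then G belongs to G_C. Consequently, G_C is closed under gluing along a clique. -/

import Mathlib

open SimpleGraph

namespace PaperSep

variable {V : Type} {W : Type}

/-- There is a walk from `a` to `b` in `G` all of whose vertices avoid the set `S`. -/
def ConnAvoid (G : SimpleGraph V) (S : Set V) (a b : V) : Prop :=
  ∃ p : G.Walk a b, ∀ v ∈ p.support, v ∉ S

/-- `S` is an `(a,b)`-separator of `G`. -/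
def IsSep (G : SimpleGraph V) (a b : V) (S : Set V) : Prop :=
  a ∉ S ∧ b ∉ S ∧ ¬ ConnAvoid G S a b

/-- `S` is a minimal `(a,b)`-separator of `G`. -/
def IsMinSep (G : SimpleGraph V) (a b : V) (S : Set V) : Prop :=
  IsSep G a b S ∧ ∀ T ⊂ S, ¬ IsSep G a b T

/-- `S` is a minimal separator of `G`. -/
def IsMinimalSeparator (G : SimpleGraph V) (S : Set V) : Prop :=
  ∃ a b : V, a ≠ b ∧ ¬ G.Adj a b ∧ IsMinSep G a b S

/-- `K` is a cutset of `G`, i.e. `G − K` is disconnected. -/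
def IsCutset (G : SimpleGraph V) (K : Set V) : Prop :=
  ∃ a b : V, a ∉ K ∧ b ∉ K ∧ ¬ ConnAvoid G K a b

/-- `K` is a minimal cutset of `G`. -/
def IsMinimalCutset (G : SimpleGraph V) (K : Set V) : Prop :=
  IsCutset G K ∧ ∀ T ⊂ K, ¬ IsCutset G T

/-- A class of finite graphs. -/
def GraphClass : Type 1 :=
  ∀ (α : Type) [Finite α], SimpleGraph α → Prop

/-- A class is hereditary if it is closed under isomorphism and induced subgraphs. -/
def Hereditary (C : GraphClass) : Prop :=
  ∀ (α : Type) [Finite α] (G : SimpleGraph α) (β : Type) [Finite β] (H : SimpleGraph β)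
    (s : Set α), Nonempty (H ≃g G.induce s) → C α G → C β H

/-- `G ∈ 𝒢_C` : every minimal separator of `G` induces a graph in `C`. -/
def MemGC (C : GraphClass) {α : Type} [Finite α] (G : SimpleGraph α) : Prop :=
  ∀ S : Set α, IsMinimalSeparator G S → C ↥S (G.induce S)

/-- The class `𝒢_C`. -/
def GCclass (C : GraphClass) : GraphClass :=
  fun α inst G => @MemGC C α inst G

/-- `S` is a union of `k` (possibly empty) cliques of `G`. -/
def UnionOfCliques (G : SimpleGraph V) (k : ℕ) (S : Set V) : Prop :=
  ∃ f : Fin k → Set V, (∀ i, G.IsClique (f i)) ∧ S = ⋃ i, f i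

/-- `G ∈ 𝒢_k` : every minimal separator of `G` is a union of `k` cliques. -/
def MemGk (k : ℕ) (G : SimpleGraph V) : Prop :=
  ∀ S : Set V, IsMinimalSeparator G S → UnionOfCliques G k S

/-- The class `𝒢_k`. -/
def Gkclass (k : ℕ) : GraphClass := fun _ _ G => MemGk k G

/-- The class `𝒞_k` of graphs whose vertex set is a union of `k` cliques. -/
def Ckclass (k : ℕ) : GraphClass := fun _ _ G => UnionOfCliques G k Set.univ

/-- An induced minor model of `H` in `G`. -/
def IsIMModel (G : SimpleGraph V) (H : SimpleGraph W) (X : W → Set V) : Prop :=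
  (∀ w, (X w).Nonempty) ∧
  (∀ u w : W, u ≠ w → Disjoint (X u) (X w)) ∧
  (∀ w, (G.induce (X w)).Connected) ∧
  (∀ u w : W, u ≠ w → (H.Adj u w ↔ ∃ a ∈ X u, ∃ b ∈ X w, G.Adj a b))

/-- `H` is an induced minor of `G`. -/
def IsInducedMinor (H : SimpleGraph W) (G : SimpleGraph V) : Prop :=
  ∃ X : W → Set V, IsIMModel G H X

/-- The class `C` is closed under induced minors. -/
def IMClosed (C : GraphClass) : Prop :=
  ∀ (α : Type) [Finite α] (G : SimpleGraph α) (β : Type) [Finite β] (H : SimpleGraph β),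
    C α G → IsInducedMinor H G → C β H

/-- The class `C` is closed under the addition of edges. -/
def EdgeAddClosed (C : GraphClass) : Prop :=
  ∀ (α : Type) [Finite α] (G : SimpleGraph α) (a b : α), a ≠ b → ¬ G.Adj a b →
    C α G → C α (G ⊔ SimpleGraph.edge a b)

/-- `G ∈ ℳ_C` : `G ∉ C` but every proper induced minor of `G` is in `C`.
(For finite graphs, the proper induced minors of `G` are exactly the induced minors of `G`
not isomorphic to `G`.) -/
def MemMC (C : GraphClass) {α : Type} [Finite α] (G : SimpleGraph α) : Prop :=
  ¬ C α G ∧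
  ∀ (β : Type) [Finite β] (H : SimpleGraph β),
    IsInducedMinor H G → IsEmpty (H ≃g G) → C β H

/-- The complete join of two graphs. -/
def join (G : SimpleGraph V) (H : SimpleGraph W) : SimpleGraph (V ⊕ W) :=
  SimpleGraph.fromRel (fun x y =>
    match x, y with
    | Sum.inl a, Sum.inl b => G.Adj a b
    | Sum.inr a, Sum.inr b => H.Adj a b
    | _, _ => True)

/-- The class `C` is closed under the addition of universal vertices (up to isomorphism). -/
def UnivAddClosed (C : GraphClass) : Prop :=
  ∀ (α : Type) [Finite α] (G : SimpleGraph α) (β : Type) [Finite β] (H : SimpleGraph β),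
    C α G → Nonempty (H ≃g join (⊥ : SimpleGraph (Fin 1)) G) → C β H

/-- `G` has a universal vertex. -/
def HasUniversalVertex (G : SimpleGraph V) : Prop :=
  ∃ v : V, ∀ w : V, w ≠ v → G.Adj v w



/-- `G` is a theta: two nonadjacent vertices joined by three internally disjoint induced
paths of length at least two, with no other vertices or edges
(equivalently, a subdivision of `K_{2,3}`). -/
def IsTheta (G : SimpleGraph V) : Prop :=
  ∃ (a b : V) (P₁ P₂ P₃ : G.Walk a b),
    a ≠ b ∧
    P₁.IsPath ∧ P₂.IsPath ∧ P₃.IsPath ∧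
    2 ≤ P₁.length ∧ 2 ≤ P₂.length ∧ 2 ≤ P₃.length ∧
    (∀ v : V, v ∈ P₁.support → v ∈ P₂.support → v = a ∨ v = b) ∧
    (∀ v : V, v ∈ P₁.support → v ∈ P₃.support → v = a ∨ v = b) ∧
    (∀ v : V, v ∈ P₂.support → v ∈ P₃.support → v = a ∨ v = b) ∧
    (∀ v : V, v ∈ P₁.support ∨ v ∈ P₂.support ∨ v ∈ P₃.support) ∧
    (∀ u v : V, G.Adj u v ↔
      s(u, v) ∈ P₁.edges ∨ s(u, v) ∈ P₂.edges ∨ s(u, v) ∈ P₃.edges)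

/-- `G` is a pyramid: an apex `a` joined to a triangle `b₁b₂b₃` by three paths sharing only
`a`, at least two of which have length at least two, with no other vertices or edges. -/
def IsPyramid (G : SimpleGraph V) : Prop :=
  ∃ (a b₁ b₂ b₃ : V) (P₁ : G.Walk a b₁) (P₂ : G.Walk a b₂) (P₃ : G.Walk a b₃),
    G.Adj b₁ b₂ ∧ G.Adj b₁ b₃ ∧ G.Adj b₂ b₃ ∧
    P₁.IsPath ∧ P₂.IsPath ∧ P₃.IsPath ∧
    1 ≤ P₁.length ∧ 1 ≤ P₂.length ∧ 1 ≤ P₃.length ∧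
    ((2 ≤ P₁.length ∧ 2 ≤ P₂.length) ∨ (2 ≤ P₁.length ∧ 2 ≤ P₃.length) ∨
      (2 ≤ P₂.length ∧ 2 ≤ P₃.length)) ∧
    (∀ v : V, v ∈ P₁.support → v ∈ P₂.support → v = a) ∧
    (∀ v : V, v ∈ P₁.support → v ∈ P₃.support → v = a) ∧
    (∀ v : V, v ∈ P₂.support → v ∈ P₃.support → v = a) ∧
    (∀ v : V, v ∈ P₁.support ∨ v ∈ P₂.support ∨ v ∈ P₃.support) ∧
    (∀ u v : V, G.Adj u v ↔
      s(u, v) ∈ P₁.edges ∨ s(u, v) ∈ P₂.edges ∨ s(u, v) ∈ P₃.edges ∨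
      s(u, v) = s(b₁, b₂) ∨ s(u, v) = s(b₁, b₃) ∨ s(u, v) = s(b₂, b₃))

/-- `G` is a prism: two disjoint triangles joined by three pairwise disjoint paths, with no
other vertices or edges. -/
def IsPrism (G : SimpleGraph V) : Prop :=
  ∃ (a₁ a₂ a₃ b₁ b₂ b₃ : V) (P₁ : G.Walk a₁ b₁) (P₂ : G.Walk a₂ b₂) (P₃ : G.Walk a₃ b₃),
    G.Adj a₁ a₂ ∧ G.Adj a₁ a₃ ∧ G.Adj a₂ a₃ ∧
    G.Adj b₁ b₂ ∧ G.Adj b₁ b₃ ∧ G.Adj b₂ b₃ ∧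
    P₁.IsPath ∧ P₂.IsPath ∧ P₃.IsPath ∧
    1 ≤ P₁.length ∧ 1 ≤ P₂.length ∧ 1 ≤ P₃.length ∧
    (∀ v : V, v ∈ P₁.support → v ∈ P₂.support → False) ∧
    (∀ v : V, v ∈ P₁.support → v ∈ P₃.support → False) ∧
    (∀ v : V, v ∈ P₂.support → v ∈ P₃.support → False) ∧
    (∀ v : V, v ∈ P₁.support ∨ v ∈ P₂.support ∨ v ∈ P₃.support) ∧
    (∀ u v : V, G.Adj u v ↔
      s(u, v) ∈ P₁.edges ∨ s(u, v) ∈ P₂.edges ∨ s(u, v) ∈ P₃.edges ∨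
      s(u, v) = s(a₁, a₂) ∨ s(u, v) = s(a₁, a₃) ∨ s(u, v) = s(a₂, a₃) ∨
      s(u, v) = s(b₁, b₂) ∨ s(u, v) = s(b₁, b₃) ∨ s(u, v) = s(b₂, b₃))

/-- `G` is a long prism: a prism other than the complement of `C₆`, i.e. a prism in which at
least one of the three paths has length at least two. -/
def IsLongPrism (G : SimpleGraph V) : Prop :=
  ∃ (a₁ a₂ a₃ b₁ b₂ b₃ : V) (P₁ : G.Walk a₁ b₁) (P₂ : G.Walk a₂ b₂) (P₃ : G.Walk a₃ b₃),
    G.Adj a₁ a₂ ∧ G.Adj a₁ a₃ ∧ G.Adj a₂ a₃ ∧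
    G.Adj b₁ b₂ ∧ G.Adj b₁ b₃ ∧ G.Adj b₂ b₃ ∧
    P₁.IsPath ∧ P₂.IsPath ∧ P₃.IsPath ∧
    1 ≤ P₁.length ∧ 1 ≤ P₂.length ∧ 1 ≤ P₃.length ∧
    (2 ≤ P₁.length ∨ 2 ≤ P₂.length ∨ 2 ≤ P₃.length) ∧
    (∀ v : V, v ∈ P₁.support → v ∈ P₂.support → False) ∧
    (∀ v : V, v ∈ P₁.support → v ∈ P₃.support → False) ∧
    (∀ v : V, v ∈ P₂.support → v ∈ P₃.support → False) ∧
    (∀ v : V, v ∈ P₁.support ∨ v ∈ P₂.support ∨ v ∈ P₃.support) ∧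
    (∀ u v : V, G.Adj u v ↔
      s(u, v) ∈ P₁.edges ∨ s(u, v) ∈ P₂.edges ∨ s(u, v) ∈ P₃.edges ∨
      s(u, v) = s(a₁, a₂) ∨ s(u, v) = s(a₁, a₃) ∨ s(u, v) = s(a₂, a₃) ∨
      s(u, v) = s(b₁, b₂) ∨ s(u, v) = s(b₁, b₃) ∨ s(u, v) = s(b₂, b₃))

/-- `G` is a wheel: a hole (chordless cycle of length at least four) together with one
additional vertex having at least three neighbors on the hole. -/
def IsWheel (G : SimpleGraph V) : Prop :=
  ∃ (v x : V) (c : G.Walk x x),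
    c.IsCycle ∧ 4 ≤ c.length ∧ v ∉ c.support ∧
    (∀ u : V, u = v ∨ u ∈ c.support) ∧
    (∀ u w : V, u ∈ c.support → w ∈ c.support → G.Adj u w → s(u, w) ∈ c.edges) ∧
    3 ≤ {u : V | u ∈ c.support ∧ G.Adj v u}.ncard

/-- `G` is a broken wheel: a wheel in which the neighbors of the additional vertex induce a
disconnected subgraph of the hole. -/
def IsBrokenWheel (G : SimpleGraph V) : Prop :=
  ∃ (v x : V) (c : G.Walk x x),
    c.IsCycle ∧ 4 ≤ c.length ∧ v ∉ c.support ∧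
    (∀ u : V, u = v ∨ u ∈ c.support) ∧
    (∀ u w : V, u ∈ c.support → w ∈ c.support → G.Adj u w → s(u, w) ∈ c.edges) ∧
    3 ≤ {u : V | u ∈ c.support ∧ G.Adj v u}.ncard ∧
    ¬ (G.induce {u : V | u ∈ c.support ∧ G.Adj v u}).Connected

/-- `G` is diamond-free: it has no induced subgraph isomorphic to `K₄` minus an edge. -/
def DiamondFree (G : SimpleGraph V) : Prop :=
  ¬ ∃ a b c d : V, c ≠ d ∧ G.Adj a b ∧ G.Adj a c ∧ G.Adj a d ∧ G.Adj b c ∧ G.Adj b d ∧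
    ¬ G.Adj c d

/-- The short `n`-prism: two `n`-vertex cliques joined by a perfect matching. -/
def completePrism (n : ℕ) : SimpleGraph (Fin n ⊕ Fin n) :=
  SimpleGraph.fromRel (fun x y =>
    match x, y with
    | Sum.inl _, Sum.inl _ => True
    | Sum.inr _, Sum.inr _ => True
    | Sum.inl i, Sum.inr j => i = j
    | Sum.inr i, Sum.inl j => i = j)

/-- `G` is a complete prism, i.e. a short `n`-prism for some `n ≥ 3`. -/
def IsCompletePrism (G : SimpleGraph V) : Prop :=
  ∃ n : ℕ, 3 ≤ n ∧ Nonempty (G ≃g completePrism n)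

/-- `G` is a cycle. -/
def IsCycleGraph (G : SimpleGraph V) : Prop :=
  ∃ n : ℕ, 3 ≤ n ∧ Nonempty (G ≃g cycleGraph n)

/-- `G` is a complete graph. -/
def IsCompleteGraph (G : SimpleGraph V) : Prop :=
  ∀ u v : V, u ≠ v → G.Adj u v

/-- `G` has a clique-cutset. -/
def HasCliqueCutset (G : SimpleGraph V) : Prop :=
  ∃ K : Set V, G.IsClique K ∧ IsCutset G K

/-! A minimal separator `S` contained in the clique `K` is itself a clique, hence in `C`.
Otherwise, since `K \ S` is a clique it meets at most one component of `G - S`; so the component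
of one of the two separated vertices, say `b`, misses `K` and lies on one side, say `B`. Every
vertex of `S` has a neighbour in that component, so `S ⊆ B ∪ K`. A walk that leaves `B ∪ K`
enters and exits `A` through the clique `K`, so it can be shortcut inside `B ∪ K`; hence `S` is
still a minimal separator of `G[B ∪ K]` (between `b` and a neighbour in `B ∪ K` of the component
on the other side), and `G[S] ∈ C` because `C` is hereditary. -/

section CliqueCutset

variable {G : SimpleGraph V} {S X K A T : Set V} {a b c v x y : V}

namespace ConnAvoid

lemma refl (h : a ∉ S) : ConnAvoid G S a a := ⟨.nil, by simpa using h⟩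

lemma symm (h : ConnAvoid G S a b) : ConnAvoid G S b a := by
  obtain ⟨p, hp⟩ := h
  exact ⟨p.reverse, by simpa using hp⟩

lemma trans (h : ConnAvoid G S a b) (h' : ConnAvoid G S b c) : ConnAvoid G S a c := by
  obtain ⟨p, hp⟩ := h
  obtain ⟨q, hq⟩ := h'
  exact ⟨p.append q, fun v hv => ((Walk.mem_support_append_iff p q).1 hv).elim (hp v) (hq v)⟩

lemma of_adj (h : G.Adj a b) (ha : a ∉ S) (hb : b ∉ S) : ConnAvoid G S a b :=
  ⟨h.toWalk, by simp [ha, hb]⟩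

lemma of_isClique (hK : G.IsClique K) (ha : a ∈ K) (hb : b ∈ K) (haS : a ∉ S) (hbS : b ∉ S) :
    ConnAvoid G S a b := by
  obtain rfl | hab := eq_or_ne a b
  · exact refl haS
  · exact of_adj (hK ha hb hab) haS hbS

lemma left_notMem (h : ConnAvoid G S a b) : a ∉ S := by
  obtain ⟨p, hp⟩ := h
  exact hp a p.start_mem_support

lemma right_notMem (h : ConnAvoid G S a b) : b ∉ S := h.symm.left_notMem

lemma mono (h : ConnAvoid G S a b) (hXS : X ⊆ S) : ConnAvoid G X a b := by
  obtain ⟨p, hp⟩ := h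
  exact ⟨p, fun v hv hvX => hp v hv (hXS hvX)⟩

lemma induction_on {P : V → Prop} (h : ConnAvoid G S b x) (hb : P b)
    (hstep : ∀ u w, ConnAvoid G S b u → G.Adj u w → w ∉ S → P u → P w) : P x := by
  suffices ∀ {u} (q : G.Walk u x), (∀ v ∈ q.support, v ∉ S) → ConnAvoid G S b u → P u → P x
    from
    h.elim fun p hp => this p hp (refl (hp b p.start_mem_support)) hb
  intro u q
  clear h
  induction q with
  | nil => exact fun _ _ hu => hu
  | @cons u w x huw q ih =>
    intro hq hbu hu
    have hwS : w ∉ S := hq w (by simp)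
    exact ih (fun v hv => hq v (by simp [hv])) (hbu.trans (of_adj huw hbu.right_notMem hwS))
      (hstep u w hbu huw hwS hu)

/-- A walk between two vertices outside `A` can jump across the clique `K` instead of entering
`A`. -/
lemma union_of_isClique (hK : G.IsClique K) (hA : ∀ u ∈ A, ∀ w ∉ A, G.Adj u w → w ∈ K)
    (h : ConnAvoid G X x y) (hx : x ∉ A) (hy : y ∉ A) : ConnAvoid G (X ∪ A) x y := by
  suffices ∀ {u} (q : G.Walk u y), (∀ v ∈ q.support, v ∉ X) →
      (u ∉ A → ConnAvoid G (X ∪ A) u y) ∧ (u ∈ A → ∃ k ∈ K, ConnAvoid G (X ∪ A) k y) from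
    h.elim fun p hp => (this p hp).1 hx
  intro u q
  clear h
  induction q with
  | nil =>
    exact fun hq => ⟨fun hu => refl (by simpa [hu] using hq), fun hu => absurd hu hy⟩
  | @cons u z y huz q ih =>
    intro hq
    obtain ⟨ih_out, ih_in⟩ := ih hy fun v hv => hq v (by simp [hv])
    have huX : u ∉ X := hq u (by simp)
    by_cases hz : z ∈ A
    · obtain ⟨k, hk, hky⟩ := ih_in hz
      refine ⟨fun hu => ?_, fun _ => ⟨k, hk, hky⟩⟩
      exact (of_isClique hK (hA z hz u hu huz.symm) hk (by simp [huX, hu])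
        hky.left_notMem).trans hky
    · have hzy := ih_out hz
      exact ⟨fun hu => (of_adj huz (by simp [huX, hu]) hzy.left_notMem).trans hzy,
        fun hu => ⟨z, hA u hu z hz huz, hzy⟩⟩

lemma mem_of_nbhd_subset (hA : ∀ u ∈ A, ∀ w ∉ A, G.Adj u w → w ∈ K)
    (hbK : ∀ k ∈ K, ¬ ConnAvoid G S b k) (h : ConnAvoid G S b x) (hbA : b ∈ A) : x ∈ A :=
  h.induction_on hbA fun u w hbu huw hwS hu => by_contra fun hwA =>
    hbK w (hA u hu w hwA huw) (hbu.trans (of_adj huw hbu.right_notMem hwS))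

end ConnAvoid

lemma connAvoid_induce_iff {x y : T} :
    ConnAvoid (G.induce T) (Subtype.val ⁻¹' X) x y ↔ ConnAvoid G (X ∪ Tᶜ) x y := by
  constructor
  · rintro ⟨p, hp⟩
    refine ⟨p.map (Embedding.induce T).toHom, fun v hv => ?_⟩
    change v ∈ (p.map (Embedding.induce T).toHom).support at hv
    rw [Walk.support_map, List.mem_map] at hv
    obtain ⟨w, hw, rfl⟩ := hv
    exact fun hwX => hwX.elim (hp w hw) (· w.2)
  · rintro ⟨p, hp⟩
    have hpT : ∀ v ∈ p.support, v ∈ T := fun v hv => by simpa using (not_or.1 (hp v hv)).2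
    refine ⟨p.induce T hpT, fun v hv hvX => ?_⟩
    simp only [Walk.support_induce, List.mem_attachWith] at hv
    exact hp v hv (.inl hvX)

lemma IsSep.ne (h : IsSep G a b S) : a ≠ b := by
  rintro rfl
  exact h.2.2 (.refl h.1)

lemma IsSep.not_adj (h : IsSep G a b S) : ¬ G.Adj a b := fun hab =>
  h.2.2 (.of_adj hab h.1 h.2.1)

lemma IsSep.symm (h : IsSep G a b S) : IsSep G b a S :=
  ⟨h.2.1, h.1, fun hba => h.2.2 hba.symm⟩

/-- `K \ S` is a clique, so it lies in a single component of `G - S`. -/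
lemma IsSep.forall_not_connAvoid_of_isClique (h : IsSep G a b S) (hK : G.IsClique K) :
    (∀ k ∈ K, ¬ ConnAvoid G S a k) ∨ (∀ k ∈ K, ¬ ConnAvoid G S b k) := by
  by_contra! hcon
  obtain ⟨⟨k, hk, hak⟩, ⟨l, hl, hbl⟩⟩ := hcon
  exact h.2.2 (hak.trans
    ((ConnAvoid.of_isClique hK hk hl hak.right_notMem hbl.right_notMem).trans hbl.symm))

lemma IsMinSep.symm (h : IsMinSep G a b S) : IsMinSep G b a S :=
  ⟨h.1.symm, fun T hT hsep => h.2 T hT hsep.symm⟩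

lemma IsMinSep.isMinimalSeparator (h : IsMinSep G a b S) : IsMinimalSeparator G S :=
  ⟨a, b, h.1.ne, h.1.not_adj, h⟩

lemma IsMinSep.connAvoid_of_ssubset (h : IsMinSep G a b S) (hT : T ⊂ S) : ConnAvoid G T a b := by
  by_contra hab
  exact h.2 T hT ⟨fun ha => h.1.1 (hT.subset ha), fun hb => h.1.2.1 (hT.subset hb), hab⟩

lemma IsMinSep.exists_adj_connAvoid (h : IsMinSep G a b S) (hv : v ∈ S) :
    ∃ u, G.Adj u v ∧ ConnAvoid G S a u := by
  by_contra! hno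
  have hab := h.connAvoid_of_ssubset (Set.sdiff_singleton_ssubset.2 hv)
  refine h.1.2.2 (hab.induction_on (.refl h.1.1) fun u w _ huw hw hu => ?_)
  have hwv : w ≠ v := by
    rintro rfl
    exact hno u huw hu
  exact hu.trans (.of_adj huw hu.right_notMem fun hwS => hw ⟨hwS, hwv⟩)

lemma IsMinSep.of_connAvoid_left (h : IsMinSep G a b S) (hac : ConnAvoid G S a c) :
    IsMinSep G c b S :=
  ⟨⟨hac.right_notMem, h.1.2.1, fun hcb => h.1.2.2 (hac.trans hcb)⟩, fun _ hT hsep =>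
    hsep.2.2 ((hac.mono hT.subset).symm.trans (h.connAvoid_of_ssubset hT))⟩

lemma IsMinSep.induce (h : IsMinSep G a b S) (ha : a ∈ T) (hb : b ∈ T)
    (hT : ∀ X, ConnAvoid G X a b → ConnAvoid G (X ∪ Tᶜ) a b) :
    IsMinSep (G.induce T) ⟨a, ha⟩ ⟨b, hb⟩ (Subtype.val ⁻¹' S) := by
  refine ⟨⟨h.1.1, h.1.2.1, fun hab => h.1.2.2 ?_⟩, fun X hX hsep => hsep.2.2 ?_⟩
  · exact (connAvoid_induce_iff.1 hab).mono Set.subset_union_left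
  · have hXS : Subtype.val '' X ⊂ S :=
      (Subtype.val_injective.image_strictMono hX).trans_le (Set.image_preimage_subset _ _)
    rw [← Set.preimage_image_eq X Subtype.val_injective]
    exact connAvoid_induce_iff.2 (hT _ (h.connAvoid_of_ssubset hXS))

lemma IsMinSep.isMinimalSeparator_induce_compl (hK : G.IsClique K)
    (hA : ∀ u ∈ A, ∀ w ∉ A, G.Adj u w → w ∈ K) (h : IsMinSep G a b S) (hSK : ¬ S ⊆ K)
    (hb : ∀ x, ConnAvoid G S b x → x ∉ A ∪ K) :
    S ⊆ Aᶜ ∧ IsMinimalSeparator (G.induce Aᶜ) (Subtype.val ⁻¹' S) := by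
  have hSA : S ⊆ Aᶜ := fun v hv hvA => by
    obtain ⟨u, huv, hbu⟩ := h.symm.exists_adj_connAvoid hv
    exact hb u hbu (.inr (hA v hvA u (fun huA => hb u hbu (.inl huA)) huv.symm))
  obtain ⟨v, hvS, hvK⟩ := Set.not_subset.1 hSK
  obtain ⟨c, hcv, hac⟩ := h.exists_adj_connAvoid hvS
  have hcA : c ∉ A := fun hcA => hvK (hA c hcA v (hSA hvS) hcv)
  have hbA : b ∉ A := fun hbA => hb b (.refl h.1.2.1) (.inl hbA)
  refine ⟨hSA, ((h.of_connAvoid_left hac).induce hcA hbA fun X hX => ?_).isMinimalSeparator⟩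
  rw [compl_compl]
  exact hX.union_of_isClique hK hA hcA hbA

lemma Hereditary.of_iso {C : GraphClass} (hC : Hereditary C) {α β : Type} [Finite α]
    [Finite β] {G : SimpleGraph α} {H : SimpleGraph β} (e : H ≃g G) (h : C α G) : C β H :=
  hC α G β H Set.univ ⟨(induceUnivIso G).symm.comp e⟩ h

lemma Hereditary.of_induce_induce {C : GraphClass} (hC : Hereditary C) [Finite V]
    (hST : S ⊆ T) (h : C _ ((G.induce T).induce (Subtype.val ⁻¹' S))) : C S (G.induce S) :=
  hC.of_iso ⟨⟨fun v => ⟨⟨v, hST v.2⟩, v.2⟩, fun v => ⟨v.1, v.2⟩, fun _ => rfl, fun _ => rfl⟩,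
    Iff.rfl⟩ h

lemma IsMinSep.mem_of_memGC_induce_compl {C : GraphClass} (hC : Hereditary C) [Finite V]
    (hK : G.IsClique K) (hA : ∀ u ∈ A, ∀ w ∉ A, G.Adj u w → w ∈ K) (h : IsMinSep G a b S)
    (hSK : ¬ S ⊆ K) (hb : ∀ x, ConnAvoid G S b x → x ∉ A ∪ K) (hG : MemGC C (G.induce Aᶜ)) :
    C S (G.induce S) :=
  have ⟨hSA, hsep⟩ := h.isMinimalSeparator_induce_compl hK hA hSK hb
  hC.of_induce_induce hSA (hG _ hsep)

lemma compl_eq_union_of_disjoint {B : Set V} (hAB : Disjoint A B) (hAK : Disjoint A K)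
    (hcover : A ∪ B ∪ K = Set.univ) : Aᶜ = B ∪ K :=
  (isCompl_iff.2 ⟨hAB.union_right hAK,
    codisjoint_iff.2 (by show A ∪ (B ∪ K) = Set.univ; rwa [← Set.union_assoc])⟩).compl_eq

lemma mem_of_adj_of_compl_eq {B : Set V} (hAc : Aᶜ = B ∪ K)
    (hanti : ∀ a ∈ A, ∀ b ∈ B, ¬ G.Adj a b) : ∀ u ∈ A, ∀ w ∉ A, G.Adj u w → w ∈ K := by
  intro u hu w hw huw
  rcases (hAc ▸ hw : w ∈ B ∪ K) with hwB | hwK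
  exacts [absurd huw (hanti u hu w hwB), hwK]

end CliqueCutset

theorem statement_2_general (C : GraphClass) (hC : Hereditary C)
    (hcomplete : ∀ (α : Type) [Finite α], C α (⊤ : SimpleGraph α))
    (V : Type) [Finite V] (G : SimpleGraph V) (A B K : Set V)
    (hAB : Disjoint A B) (hAK : Disjoint A K) (hBK : Disjoint B K)
    (hcover : A ∪ B ∪ K = Set.univ)
    (hanti : ∀ a ∈ A, ∀ b ∈ B, ¬ G.Adj a b)
    (hclique : G.IsClique K)
    (hGA : MemGC C (G.induce (A ∪ K))) (hGB : MemGC C (G.induce (B ∪ K))) :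
    MemGC C G := by
  rintro S ⟨a, b, -, -, hmin⟩
  by_cases hSK : S ⊆ K
  · rw [induce_eq_top.2 (hclique.subset hSK)]
    exact hcomplete S
  have hAc : Aᶜ = B ∪ K := compl_eq_union_of_disjoint hAB hAK hcover
  have hBc : Bᶜ = A ∪ K :=
    compl_eq_union_of_disjoint hAB.symm hBK (by rwa [Set.union_comm B])
  have hNA := mem_of_adj_of_compl_eq hAc hanti
  have hNB := mem_of_adj_of_compl_eq hBc fun b hb a ha hba => hanti a ha b hb hba.symm
  obtain ⟨a, b, hmin, hbK⟩ : ∃ a b, IsMinSep G a b S ∧ ∀ k ∈ K, ¬ ConnAvoid G S b k :=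
    (hmin.1.forall_not_connAvoid_of_isClique hclique).elim (fun h => ⟨b, a, hmin.symm, h⟩)
      fun h => ⟨a, b, hmin, h⟩
  by_cases hbA : b ∈ A
  · refine hmin.mem_of_memGC_induce_compl hC hclique hNB hSK (fun x hx => ?_) (hBc ▸ hGA)
    rw [← hAc]
    exact not_not_intro (hx.mem_of_nbhd_subset hNA hbK hbA)
  · have hbB : b ∈ B := (hAc ▸ hbA : b ∈ B ∪ K).resolve_right
      fun hbK' => hbK b hbK' (.refl hmin.1.2.1)
    refine hmin.mem_of_memGC_induce_compl hC hclique hNA hSK (fun x hx => ?_) (hAc ▸ hGB)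
    rw [← hBc]
    exact not_not_intro (hx.mem_of_nbhd_subset hNB hbK hbB)

/-- if `C` is hereditary and contains all complete graphs, then `𝒢_C` is
closed under gluing along a clique: if `(A, B, K)` is a cut-partition of `G` with `K` a
clique, and `G[A ∪ K], G[B ∪ K] ∈ 𝒢_C`, then `G ∈ 𝒢_C`. -/
theorem statement_2 (C : GraphClass) (hC : Hereditary C)
    (hcomplete : ∀ (α : Type) [Finite α], C α (⊤ : SimpleGraph α))
    (V : Type) [Finite V] (G : SimpleGraph V) (A B K : Set V)
    (hA : A.Nonempty) (hB : B.Nonempty)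
    (hAB : Disjoint A B) (hAK : Disjoint A K) (hBK : Disjoint B K)
    (hcover : A ∪ B ∪ K = Set.univ)
    (hanti : ∀ a ∈ A, ∀ b ∈ B, ¬ G.Adj a b)
    (hclique : G.IsClique K)
    (hGA : MemGC C (G.induce (A ∪ K))) (hGB : MemGC C (G.induce (B ∪ K))) :
    MemGC C G :=
  statement_2_general C hC hcomplete V G A B K hAB hAK hBK hcover hanti hclique hGA hGB

end PaperSep
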